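/- arXiv:1506.08150 — 4 statements merged into one kernel-verified Lean document; each statement's English description precedes it below -/
import Mathlib

section
/- Let 𝒯 be a convex tree of dyadic squares. For each k ∈ ℤ and each dyadic point (p,q) ∈ ∂T_k ∩ (2^kℤ × 2^kℤ) such that the square [p−2^k,p]×[q−2^k,q] does not belong to 𝒯_k, define S(p,q,k) := [p−2^k, p−2^{k−1}] × [q−2^k, q−2^{k−1}]. Then the squares S(p,q,k), ranging over all such triples (p,q,k), are pairwise almost disjoint (any two distinct ones intersect in a set of Lebesgue measure zero), and each is contained in 3R_𝒯, the cube with the same center as the root R_𝒯 and three times its sidelength. -/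
open MeasureTheory Set

noncomputable section

/-- The dyadic square with scale parameter `a.1` and position `(a.2.1, a.2.2)`. -/
def dSq (a : ℤ × ℤ × ℤ) : Set (ℝ × ℝ) :=
  Icc ((2:ℝ)^a.1 * (a.2.1 : ℝ)) ((2:ℝ)^a.1 * ((a.2.1 : ℝ) + 1)) ×ˢ
    Icc ((2:ℝ)^a.1 * (a.2.2 : ℝ)) ((2:ℝ)^a.1 * ((a.2.2 : ℝ) + 1))

/-- A convex tree of dyadic squares. -/
structure ConvexTree where
  squares : Finset (ℤ × ℤ × ℤ)
  root : ℤ × ℤ × ℤ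
  root_mem : root ∈ squares
  subset_root : ∀ a ∈ squares, dSq a ⊆ dSq root
  convex : ∀ a b c : ℤ × ℤ × ℤ, a ∈ squares → c ∈ squares →
    dSq a ⊆ dSq b → dSq b ⊆ dSq c → b ∈ squares

/-- `𝒯_k`: parameters of squares of the tree of sidelength `2^k`. -/
def treeLevel (T : ConvexTree) (k : ℤ) : Set (ℤ × ℤ × ℤ) :=
  {a | a ∈ T.squares ∧ a.1 = k}

/-- `T_k`: union of the squares of sidelength `2^k` in the tree. -/
def Tk (T : ConvexTree) (k : ℤ) : Set (ℝ × ℝ) :=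
  ⋃ a ∈ treeLevel T k, dSq a

/-- The Whitney region `Ω_𝒞` in the upper half space. -/
def Omega (C : Set (ℤ × ℤ × ℤ)) : Set ((ℝ × ℝ) × ℝ) :=
  ⋃ a ∈ C, dSq a ×ˢ Icc ((2:ℝ)^a.1 / 2) ((2:ℝ)^a.1)

/-- Euclidean norm on `ℝ²`. -/
def en (z : ℝ × ℝ) : ℝ := Real.sqrt (z.1^2 + z.2^2)

/-- `θ(x,y) = (1+|(x,y)|⁴)⁻¹`. -/
def theta (z : ℝ × ℝ) : ℝ := (1 + en z ^ 4)⁻¹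

/-- `ϑ(x) = (1+|x|)⁻⁴`. -/
def vth (x : ℝ) : ℝ := ((1 + |x|)^4)⁻¹

/-- `F² * [θ]_t (p,q)`. -/
def convTheta (F : ℝ × ℝ → ℝ) (p q t : ℝ) : ℝ :=
  ∫ z : ℝ × ℝ, (F z)^2 * ((t^2)⁻¹ * theta ((p - z.1)/t, (q - z.2)/t))

/-- `M(F, 𝒞)`. -/
def Msize (F : ℝ × ℝ → ℝ) (C : Set (ℤ × ℤ × ℤ)) : ℝ :=
  ⨆ w : Omega C, Real.sqrt (convTheta F w.1.1.1 w.1.1.2 w.1.2)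

/-- `F * [φ₁⊗φ₂⊗φ₃⊗φ₄]_t (p,q,p,q)` where `F` is the entangled product of `F₁,F₂,F₃,F₄`. -/
def entConv (F1 F2 F3 F4 : ℝ × ℝ → ℝ) (φ1 φ2 φ3 φ4 : ℝ → ℝ) (t p q : ℝ) : ℝ :=
  ∫ x : ℝ, ∫ y : ℝ, ∫ x' : ℝ, ∫ y' : ℝ,
    F1 (x, y) * F2 (x', y) * F3 (x', y') * F4 (x, y') *
      (t⁻¹ * φ1 ((p - x)/t)) * (t⁻¹ * φ2 ((q - y)/t)) *
      (t⁻¹ * φ3 ((p - x')/t)) * (t⁻¹ * φ4 ((q - y')/t))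

/-- The local form `Θ^𝒞_{φ₁,φ₂,φ₃,φ₄}`. -/
def Theta (C : Set (ℤ × ℤ × ℤ)) (φ1 φ2 φ3 φ4 : ℝ → ℝ)
    (F1 F2 F3 F4 : ℝ × ℝ → ℝ) : ℝ :=
  ∫ w in Omega C, entConv F1 F2 F3 F4 φ1 φ2 φ3 φ4 w.2 w.1.1 w.1.2 / w.2

/-- Bounded, positive, measurable with finite measure support. -/
def Nice (F : ℝ × ℝ → ℝ) : Prop :=
  Measurable F ∧ (∃ C : ℝ, ∀ z, |F z| ≤ C) ∧
    volume (Function.support F) < ⊤ ∧ ∀ z, 0 ≤ F z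

/-- The lattice `2^kℤ × 2^kℤ`. -/
def latt (k : ℤ) : Set (ℝ × ℝ) :=
  {z | ∃ m n : ℤ, z.1 = (2:ℝ)^k * m ∧ z.2 = (2:ℝ)^k * n}

/-- `Δ(𝒯_k) = ∂T_k ∩ (2^kℤ × 2^kℤ)`. -/
def Delta (T : ConvexTree) (k : ℤ) : Set (ℝ × ℝ) := frontier (Tk T k) ∩ latt k

/-- The condition on the triple `(p,q,k)`: the point `(p,q)` is a dyadic point of `∂T_k`
and the square `[p-2^k,p]×[q-2^k,q]` does not belong to `𝒯_k`. -/
def ptCond (T : ConvexTree) (k : ℤ) (p q : ℝ) : Prop :=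
  (p, q) ∈ Delta T k ∧
    ∀ a ∈ treeLevel T k, dSq a ≠ Icc (p - (2:ℝ)^k) p ×ˢ Icc (q - (2:ℝ)^k) q

/-- The square `S(p,q,k) = [p-2^k, p-2^{k-1}] × [q-2^k, q-2^{k-1}]`. -/
def Spq (k : ℤ) (p q : ℝ) : Set (ℝ × ℝ) :=
  Icc (p - (2:ℝ)^k) (p - (2:ℝ)^k / 2) ×ˢ Icc (q - (2:ℝ)^k) (q - (2:ℝ)^k / 2)

/-- `3R`: the square with the same center as the dyadic square `dSq a` and three times
its sidelength. -/
def threeSq (a : ℤ × ℤ × ℤ) : Set (ℝ × ℝ) :=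
  Icc ((2:ℝ)^a.1 * ((a.2.1 : ℝ) - 1)) ((2:ℝ)^a.1 * ((a.2.1 : ℝ) + 2)) ×ˢ
    Icc ((2:ℝ)^a.1 * ((a.2.2 : ℝ) - 1)) ((2:ℝ)^a.1 * ((a.2.2 : ℝ) + 2))

/-!
Write `𝔻_k = 2^k ℤ`. Dyadic intervals of lengths `2^k ≤ 2^{k'}` are nested or meet in at most an
endpoint, since `𝔻_{k'} ⊆ 𝔻_k` and distinct points of `𝔻_k` are `2^k` apart. So `S(p,q,k)` and
`S(p',q',k')` can only overlap in positive measure if `Q = [p-2^k,p]×[q-2^k,q]` is contained in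
`Q' = [p'-2^{k'},p']×[q'-2^{k'},q']`, which for `k = k'` means equal triples. For `k < k'`, the
point `(p,q)` lies in a square of `𝒯_k`, and convexity lifts it to a square of `𝒯_{k'}` containing
`(p,q)`. As `Q' ∉ 𝒯`, the point `(p,q)` must lie on the right or upper edge of `Q'`; then
`S(p,q,k)` lies right of, or above, the centre of `Q'`, and `S(p',q',k')` below-left of it.
-/

def dyadicPts (k : ℤ) : AddSubgroup ℝ := AddSubgroup.zmultiples ((2:ℝ) ^ k)

lemma mem_dyadicPts {k : ℤ} {x : ℝ} : x ∈ dyadicPts k ↔ ∃ m : ℤ, x = 2 ^ k * m := by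
  simp only [dyadicPts, AddSubgroup.mem_zmultiples_iff, zsmul_eq_mul, mul_comm, eq_comm]

lemma two_zpow_mem_dyadicPts (k : ℤ) : (2:ℝ) ^ k ∈ dyadicPts k :=
  AddSubgroup.mem_zmultiples _

lemma dyadicPts_antitone : Antitone dyadicPts := by
  intro k k' hk x hx
  obtain ⟨m, rfl⟩ := mem_dyadicPts.1 hx
  obtain ⟨n, hn⟩ := Int.eq_ofNat_of_zero_le (sub_nonneg.2 hk)
  refine mem_dyadicPts.2 ⟨2 ^ n * m, ?_⟩
  have : (2:ℝ) ^ k' = 2 ^ k * 2 ^ n := by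
    rw [← zpow_natCast, ← zpow_add₀ two_ne_zero, ← hn, add_sub_cancel]
  push_cast
  rw [this, mul_assoc]

lemma add_two_zpow_le_of_lt {k : ℤ} {x y : ℝ} (hx : x ∈ dyadicPts k) (hy : y ∈ dyadicPts k)
    (h : x < y) : x + 2 ^ k ≤ y := by
  obtain ⟨m, rfl⟩ := mem_dyadicPts.1 hx
  obtain ⟨n, rfl⟩ := mem_dyadicPts.1 hy
  have hk : (0:ℝ) < 2 ^ k := by positivity
  have hmn : (m:ℝ) + 1 ≤ n := by
    exact_mod_cast Int.add_one_le_of_lt (by exact_mod_cast lt_of_mul_lt_mul_left h hk.le)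
  nlinarith

lemma dyadic_nested_or_separated {k k' : ℤ} (hk : k ≤ k') {x y : ℝ} (hx : x ∈ dyadicPts k)
    (hy : y ∈ dyadicPts k') :
    (y ≤ x ∧ x + 2 ^ k ≤ y + 2 ^ k') ∨ x + 2 ^ k ≤ y ∨ y + 2 ^ k' ≤ x := by
  have hy_le := dyadicPts_antitone hk hy
  have hy_add := dyadicPts_antitone hk (add_mem hy (two_zpow_mem_dyadicPts k'))
  rcases lt_or_ge x y with hxy | hyx
  · exact Or.inr (Or.inl (add_two_zpow_le_of_lt hx hy_le hxy))
  rcases lt_or_ge x (y + 2 ^ k') with h | h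
  · exact Or.inl ⟨hyx, add_two_zpow_le_of_lt hx hy_add h⟩
  · exact Or.inr (Or.inr h)

lemma dyadic_nested_of_common_subinterval {k k' : ℤ} (hk : k ≤ k') {x y z s : ℝ} (hs : 0 < s)
    (hx : x ∈ dyadicPts k) (hy : y ∈ dyadicPts k') (hzx : x ≤ z ∧ z + s ≤ x + 2 ^ k)
    (hzy : y ≤ z ∧ z + s ≤ y + 2 ^ k') : y ≤ x ∧ x + 2 ^ k ≤ y + 2 ^ k' := by
  rcases dyadic_nested_or_separated hk hx hy with h | h | h
  · exact h
  all_goals exfalso; linarith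

lemma dyadic_eq_of_mem_Icc_of_mem_Ioo {k : ℤ} {x y z : ℝ} (hx : x ∈ dyadicPts k)
    (hy : y ∈ dyadicPts k) (hzx : x ≤ z ∧ z ≤ x + 2 ^ k) (hzy : y < z ∧ z < y + 2 ^ k) :
    x = y := by
  have h₁ := add_two_zpow_le_of_lt hx (add_mem hy (two_zpow_mem_dyadicPts k))
    (hzx.1.trans_lt hzy.2)
  have h₂ := add_two_zpow_le_of_lt hy (add_mem hx (two_zpow_mem_dyadicPts k))
    (hzy.1.trans_le hzx.2)
  linarith

lemma exists_dyadic_ancestor {k k' : ℤ} (hk : k ≤ k') {x : ℝ} (hx : x ∈ dyadicPts k) :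
    ∃ u : ℤ, 2 ^ k' * u ≤ x ∧ x + 2 ^ k ≤ 2 ^ k' * u + 2 ^ k' := by
  have hk' : (0:ℝ) < 2 ^ k' := by positivity
  refine ⟨⌊x / 2 ^ k'⌋, ?_, add_two_zpow_le_of_lt hx ?_ ?_⟩
  · rw [mul_comm, ← le_div_iff₀ hk']
    exact Int.floor_le _
  · exact dyadicPts_antitone hk (mem_dyadicPts.2 ⟨⌊x / 2 ^ k'⌋ + 1, by push_cast; ring⟩)
  · rw [← mul_add_one, mul_comm, ← div_lt_iff₀ hk']
    exact Int.lt_floor_add_one _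

lemma volume_Icc_inter_Icc_eq_zero {a b a' b' : ℝ} (h : b ≤ a' ∨ b' ≤ a) :
    volume (Icc a b ∩ Icc a' b') = 0 := by
  rw [Icc_inter_Icc, Real.volume_Icc, ENNReal.ofReal_eq_zero, sub_nonpos]
  rcases h with h | h
  · exact min_le_of_left_le (h.trans (le_max_right _ _))
  · exact min_le_of_right_le (h.trans (le_max_left _ _))

lemma measure_prod_inter_prod_eq_zero {α β : Type*} [MeasurableSpace α] [MeasurableSpace β]
    {μ : Measure α} {ν : Measure β} [SFinite ν] {s s' : Set α} {t t' : Set β}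
    (h : μ (s ∩ s') = 0 ∨ ν (t ∩ t') = 0) : μ.prod ν (s ×ˢ t ∩ s' ×ˢ t') = 0 := by
  rw [prod_inter_prod, Measure.prod_prod]
  rcases h with h | h <;> simp [h]

def lowerHalf (k : ℤ) (p : ℝ) : Set ℝ := Icc (p - 2 ^ k) (p - 2 ^ k / 2)

lemma Spq_eq_prod (k : ℤ) (p q : ℝ) : Spq k p q = lowerHalf k p ×ˢ lowerHalf k q := rfl

lemma volume_lowerHalf_inter_eq_zero_or_nested {k k' : ℤ} (hk : k ≤ k') {p p' : ℝ}
    (hp : p ∈ dyadicPts k) (hp' : p' ∈ dyadicPts k') :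
    volume (lowerHalf k p ∩ lowerHalf k' p') = 0 ∨ (p' - 2 ^ k' ≤ p - 2 ^ k ∧ p ≤ p') := by
  have h2k : (0:ℝ) < 2 ^ k := by positivity
  have h2k' : (0:ℝ) < 2 ^ k' := by positivity
  rcases dyadic_nested_or_separated hk (sub_mem hp (two_zpow_mem_dyadicPts k))
    (sub_mem hp' (two_zpow_mem_dyadicPts k')) with h | h | h
  · exact Or.inr ⟨h.1, by linarith [h.2]⟩
  · exact Or.inl (volume_Icc_inter_Icc_eq_zero (Or.inl (by linarith)))
  · exact Or.inl (volume_Icc_inter_Icc_eq_zero (Or.inr (by linarith)))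

lemma volume_lowerHalf_inter_lowerHalf_eq_zero {k k' : ℤ} (hk : k < k') (p : ℝ) :
    volume (lowerHalf k p ∩ lowerHalf k' p) = 0 := by
  have : (2:ℝ) ^ k * 2 ≤ 2 ^ k' := by
    rw [← zpow_add_one₀ two_ne_zero]
    exact zpow_le_zpow_right₀ one_le_two hk
  exact volume_Icc_inter_Icc_eq_zero (Or.inr (by linarith))

lemma dSq_subset_dSq_iff {a b : ℤ × ℤ × ℤ} : dSq a ⊆ dSq b ↔
    ((2:ℝ) ^ b.1 * b.2.1 ≤ 2 ^ a.1 * a.2.1 ∧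
      (2:ℝ) ^ a.1 * a.2.1 + 2 ^ a.1 ≤ 2 ^ b.1 * b.2.1 + 2 ^ b.1) ∧
    ((2:ℝ) ^ b.1 * b.2.2 ≤ 2 ^ a.1 * a.2.2 ∧
      (2:ℝ) ^ a.1 * a.2.2 + 2 ^ a.1 ≤ 2 ^ b.1 * b.2.2 + 2 ^ b.1) := by
  have h2 : (0:ℝ) ≤ 2 ^ a.1 := by positivity
  simp only [dSq, mul_add_one]
  rw [prod_subset_prod_iff' ((nonempty_Icc.2 (by linarith)).prod (nonempty_Icc.2 (by linarith))),
    Icc_subset_Icc_iff (by linarith), Icc_subset_Icc_iff (by linarith)]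

lemma mem_dSq_iff {a : ℤ × ℤ × ℤ} {z : ℝ × ℝ} : z ∈ dSq a ↔
    ((2:ℝ) ^ a.1 * a.2.1 ≤ z.1 ∧ z.1 ≤ 2 ^ a.1 * a.2.1 + 2 ^ a.1) ∧
    ((2:ℝ) ^ a.1 * a.2.2 ≤ z.2 ∧ z.2 ≤ 2 ^ a.1 * a.2.2 + 2 ^ a.1) := by
  simp only [dSq, mul_add_one, mem_prod, mem_Icc]

namespace ConvexTree

variable (T : ConvexTree)

lemma level_le_root {a : ℤ × ℤ × ℤ} (ha : a ∈ T.squares) : a.1 ≤ T.root.1 := by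
  obtain ⟨⟨h₁, h₂⟩, -⟩ := dSq_subset_dSq_iff.1 (T.subset_root a ha)
  exact (zpow_le_zpow_iff_right₀ (one_lt_two : (1:ℝ) < 2)).1 (by linarith)

lemma exists_mem_superset_of_le {a : ℤ × ℤ × ℤ} (ha : a ∈ T.squares) {k' : ℤ}
    (hk : a.1 ≤ k') (hk' : k' ≤ T.root.1) : ∃ b ∈ T.squares, b.1 = k' ∧ dSq a ⊆ dSq b := by
  obtain ⟨k, m, n⟩ := a
  have h2k : (0:ℝ) < 2 ^ k := by positivity
  obtain ⟨u, hu⟩ := exists_dyadic_ancestor hk (mem_dyadicPts.2 ⟨m, rfl⟩)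
  obtain ⟨v, hv⟩ := exists_dyadic_ancestor hk (mem_dyadicPts.2 ⟨n, rfl⟩)
  obtain ⟨hm, hn⟩ := dSq_subset_dSq_iff.1 (T.subset_root _ ha)
  have hroot (r : ℤ) : (2:ℝ) ^ T.root.1 * r ∈ dyadicPts T.root.1 := mem_dyadicPts.2 ⟨r, rfl⟩
  have hanc (w : ℤ) : (2:ℝ) ^ k' * w ∈ dyadicPts k' := mem_dyadicPts.2 ⟨w, rfl⟩
  have hab : dSq (k, m, n) ⊆ dSq (k', u, v) := dSq_subset_dSq_iff.2 ⟨hu, hv⟩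
  have hb : dSq (k', u, v) ⊆ dSq T.root := dSq_subset_dSq_iff.2
    ⟨dyadic_nested_of_common_subinterval hk' h2k (hanc u) (hroot _) hu hm,
      dyadic_nested_of_common_subinterval hk' h2k (hanc v) (hroot _) hv hn⟩
  exact ⟨_, T.convex _ _ _ ha T.root_mem hab hb, rfl, hab⟩

lemma isClosed_Tk (k : ℤ) : IsClosed (Tk T k) :=
  (T.squares.finite_toSet.subset fun _ ha => ha.1).isClosed_biUnion
    fun _ _ => isClosed_Icc.prod isClosed_Icc

end ConvexTree

namespace ptCond

variable {T : ConvexTree} {k k' : ℤ} {p q p' q' : ℝ}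

lemma mem_dyadicPts (h : ptCond T k p q) : p ∈ dyadicPts k ∧ q ∈ dyadicPts k := by
  obtain ⟨⟨-, m, n, hm, hn⟩, -⟩ := h
  exact ⟨_root_.mem_dyadicPts.2 ⟨m, hm⟩, _root_.mem_dyadicPts.2 ⟨n, hn⟩⟩

lemma exists_mem_dSq (h : ptCond T k p q) : ∃ a ∈ T.squares, a.1 = k ∧ (p, q) ∈ dSq a := by
  have hmem : (p, q) ∈ Tk T k :=
    (T.isClosed_Tk k).closure_eq ▸ frontier_subset_closure h.1.1
  simp only [Tk, treeLevel, mem_iUnion, exists_prop] at hmem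
  obtain ⟨a, ⟨ha, rfl⟩, hpq⟩ := hmem
  exact ⟨a, ha, rfl, hpq⟩

lemma Spq_subset_threeSq (h : ptCond T k p q) : Spq k p q ⊆ threeSq T.root := by
  obtain ⟨a, ha, rfl, hpq⟩ := h.exists_mem_dSq
  obtain ⟨⟨hx₁, hx₂⟩, hy₁, hy₂⟩ := dSq_subset_dSq_iff.1 (T.subset_root a ha)
  obtain ⟨⟨hp₁, hp₂⟩, hq₁, hq₂⟩ := mem_dSq_iff.1 hpq
  have h2k : (0:ℝ) < 2 ^ a.1 := by positivity
  have h2K : (0:ℝ) < 2 ^ T.root.1 := by positivity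
  simp only [Spq, threeSq, mul_sub_one, mul_add]
  exact prod_mono (Icc_subset_Icc (by linarith) (by linarith))
    (Icc_subset_Icc (by linarith) (by linarith))

lemma eq_or_eq_of_nested (h : ptCond T k p q) (h' : ptCond T k' p' q') (hk : k ≤ k')
    (hp : p' - 2 ^ k' ≤ p - 2 ^ k ∧ p ≤ p') (hq : q' - 2 ^ k' ≤ q - 2 ^ k ∧ q ≤ q') :
    p = p' ∨ q = q' := by
  obtain ⟨a, ha, rfl, hpq⟩ := h.exists_mem_dSq
  obtain ⟨a', ha', rfl, -⟩ := h'.exists_mem_dSq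
  obtain ⟨b, hb, hbk, hab⟩ := T.exists_mem_superset_of_le ha hk (T.level_le_root ha')
  rw [← hbk] at h' hp hq
  obtain ⟨hp', hq'⟩ := h'.mem_dyadicPts
  have h2k : (0:ℝ) < 2 ^ a.1 := by positivity
  by_contra! hne
  obtain ⟨hbp, hbq⟩ := mem_dSq_iff.1 (hab hpq)
  have hcorner (r : ℤ) : (2:ℝ) ^ b.1 * r ∈ dyadicPts b.1 := _root_.mem_dyadicPts.2 ⟨r, rfl⟩
  have hx := dyadic_eq_of_mem_Icc_of_mem_Ioo (hcorner _) (sub_mem hp' (two_zpow_mem_dyadicPts _))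
    hbp ⟨by linarith, by linarith [lt_of_le_of_ne hp.2 hne.1]⟩
  have hy := dyadic_eq_of_mem_Icc_of_mem_Ioo (hcorner _) (sub_mem hq' (two_zpow_mem_dyadicPts _))
    hbq ⟨by linarith, by linarith [lt_of_le_of_ne hq.2 hne.2]⟩
  refine h'.2 b ⟨hb, rfl⟩ ?_
  simp only [dSq, mul_add_one, hx, hy, sub_add_cancel]

lemma volume_Spq_inter_Spq_eq_zero_of_le (h : ptCond T k p q) (h' : ptCond T k' p' q')
    (hk : k ≤ k') (hne : (k, p, q) ≠ (k', p', q')) :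
    volume (Spq k p q ∩ Spq k' p' q') = 0 := by
  obtain ⟨hp, hq⟩ := h.mem_dyadicPts
  obtain ⟨hp', hq'⟩ := h'.mem_dyadicPts
  rw [Spq_eq_prod, Spq_eq_prod, Measure.volume_eq_prod]
  apply measure_prod_inter_prod_eq_zero
  rcases volume_lowerHalf_inter_eq_zero_or_nested hk hp hp' with hx | hpp
  · exact Or.inl hx
  rcases volume_lowerHalf_inter_eq_zero_or_nested hk hq hq' with hy | hqq
  · exact Or.inr hy
  rcases hk.lt_or_eq with hk | rfl
  · rcases h.eq_or_eq_of_nested h' hk.le hpp hqq with rfl | rfl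
    · exact Or.inl (volume_lowerHalf_inter_lowerHalf_eq_zero hk p)
    · exact Or.inr (volume_lowerHalf_inter_lowerHalf_eq_zero hk q)
  · exact absurd (by rw [le_antisymm hpp.2 (by linarith), le_antisymm hqq.2 (by linarith)]) hne

end ptCond

/-- The squares `S(p,q,k)` are pairwise almost disjoint and contained in `3R_𝒯`. -/
theorem spq_almost_disjoint (T : ConvexTree) (k : ℤ) (p q : ℝ) (h : ptCond T k p q) :
    Spq k p q ⊆ threeSq T.root ∧
      ∀ (k' : ℤ) (p' q' : ℝ), ptCond T k' p' q' → (k, p, q) ≠ (k', p', q') →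
        volume (Spq k p q ∩ Spq k' p' q') = 0 := by
  refine ⟨h.Spq_subset_threeSq, fun k' p' q' h' hne => ?_⟩
  rcases le_total k k' with hk | hk
  · exact h.volume_Spq_inter_Spq_eq_zero_of_le h' hk hne
  · rw [inter_comm]
    exact h'.volume_Spq_inter_Spq_eq_zero_of_le h hk hne.symm

end
end

section
/- There is an absolute constant C such that for every convex tree 𝒯 of dyadic squares, every k ∈ ℤ, and every bounded, positive, measurable function F on ℝ² with finite measure support, M(F·1_{T_k}, 𝒯_k^c) ≤ C · M(F, 𝒯); equivalently, for every (p,q,t) ∈ Ω_{𝒯_k^c} one has ((F²·1_{T_k}) * [θ]_t(p,q))^{1/2} ≤ C · sup_{(a,b,s)∈Ω_𝒯} (F² * [θ]_s(a,b))^{1/2}. -/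
open MeasureTheory Set

noncomputable section

/-!
Fix `t ∈ [2^k/2, 2^k]` and split `T_k` into its squares `Q` of sidelength `s = 2^k`. On `Q`
the kernel `[θ]_t(p - ·, q - ·)` is bounded by `[θ]_s` centred at the lower-left corner of `Q`,
times a factor decaying like `(1 + j₁²)⁻¹ (1 + j₂²)⁻¹`, where `(j₁, j₂)` is the lattice offset of
`Q` from the square of sidelength `s` containing `(p, q)`. Since `Q` belongs to the tree, the
corner at scale `s` lies in `Ω_𝒯`, so each piece is at most that factor times `M(F, 𝒯)²`, and
the factors sum to at most `(∑ⱼ (1 + j²)⁻¹)²` over the distinct squares of `T_k`.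
-/

/-- `[θ]_t(p - z₁, q - z₂)`, the kernel of `convTheta`. -/
def thetaKernel (p q t : ℝ) (z : ℝ × ℝ) : ℝ :=
  (t ^ 2)⁻¹ * theta ((p - z.1) / t, (q - z.2) / t)

lemma theta_eq (z : ℝ × ℝ) : theta z = (1 + (z.1 ^ 2 + z.2 ^ 2) ^ 2)⁻¹ := by
  rw [theta, en, show 4 = 2 * 2 from rfl, pow_mul, Real.sq_sqrt (by positivity)]

lemma theta_nonneg (z : ℝ × ℝ) : 0 ≤ theta z := by
  rw [theta_eq]; positivity

lemma theta_le_one (z : ℝ × ℝ) : theta z ≤ 1 := by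
  rw [theta_eq]
  exact inv_le_one_of_one_le₀ (le_add_of_nonneg_right (by positivity))

lemma inv_five_le_theta {x y : ℝ} (hx : |x| ≤ 1) (hy : |y| ≤ 1) : 5⁻¹ ≤ theta (x, y) := by
  rw [theta_eq]
  have hx' : x ^ 2 ≤ 1 := by rw [← sq_abs]; nlinarith [abs_nonneg x]
  have hy' : y ^ 2 ≤ 1 := by rw [← sq_abs]; nlinarith [abs_nonneg y]
  exact inv_anti₀ (by positivity) (by nlinarith)

lemma continuous_theta : Continuous theta := by
  simp_rw [funext theta_eq]
  exact Continuous.inv₀ (by fun_prop) fun z => by positivity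

lemma thetaKernel_nonneg (p q t : ℝ) (z : ℝ × ℝ) : 0 ≤ thetaKernel p q t z :=
  mul_nonneg (by positivity) (theta_nonneg _)

lemma thetaKernel_le (p q t : ℝ) (z : ℝ × ℝ) : thetaKernel p q t z ≤ (t ^ 2)⁻¹ :=
  mul_le_of_le_one_right (by positivity) (theta_le_one _)

lemma continuous_thetaKernel (p q t : ℝ) : Continuous (thetaKernel p q t) :=
  continuous_const.mul (continuous_theta.comp (by fun_prop))

section Integrability

variable {F : ℝ × ℝ → ℝ} {CF : ℝ}

lemma sq_mul_thetaKernel_le_indicator (hCF : ∀ z, |F z| ≤ CF) (p q t : ℝ) (z : ℝ × ℝ) :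
    F z ^ 2 * thetaKernel p q t z ≤
      (Function.support F).indicator (fun _ => CF ^ 2 * (t ^ 2)⁻¹) z := by
  by_cases hz : F z = 0
  · simp [hz]
  rw [indicator_of_mem (Function.mem_support.2 hz)]
  have hF : F z ^ 2 ≤ CF ^ 2 := sq_le_sq' (abs_le.1 (hCF z)).1 (abs_le.1 (hCF z)).2
  exact mul_le_mul hF (thetaKernel_le p q t z) (thetaKernel_nonneg p q t z) (sq_nonneg _)

lemma integrable_indicator_support_const (hF : Measurable F)
    (hsupp : volume (Function.support F) < ⊤) (c : ℝ) :
    Integrable ((Function.support F).indicator fun _ => c) :=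
  (integrableOn_const hsupp.ne).integrable_indicator (measurableSet_support hF)

lemma integrable_sq_mul_thetaKernel (hF : Nice F) (p q t : ℝ) :
    Integrable fun z => F z ^ 2 * thetaKernel p q t z := by
  obtain ⟨hm, ⟨CF, hCF⟩, hsupp, -⟩ := hF
  refine (integrable_indicator_support_const hm hsupp (CF ^ 2 * (t ^ 2)⁻¹)).mono'
    ((hm.pow_const 2).mul (continuous_thetaKernel p q t).measurable).aestronglyMeasurable
    (Filter.Eventually.of_forall fun z => ?_)
  rw [Real.norm_of_nonneg (mul_nonneg (sq_nonneg _) (thetaKernel_nonneg p q t z))]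
  exact sq_mul_thetaKernel_le_indicator hCF p q t z

lemma convTheta_le (hm : Measurable F) (hCF : ∀ z, |F z| ≤ CF)
    (hsupp : volume (Function.support F) < ⊤) (p q t : ℝ) :
    convTheta F p q t ≤ CF ^ 2 * (t ^ 2)⁻¹ * volume.real (Function.support F) := by
  calc convTheta F p q t
      ≤ ∫ z, (Function.support F).indicator (fun _ => CF ^ 2 * (t ^ 2)⁻¹) z :=
        integral_mono_of_nonneg
          (Filter.Eventually.of_forall fun z =>
            mul_nonneg (sq_nonneg _) (thetaKernel_nonneg p q t z))
          (integrable_indicator_support_const hm hsupp _)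
          (Filter.Eventually.of_forall (sq_mul_thetaKernel_le_indicator hCF p q t))
    _ = CF ^ 2 * (t ^ 2)⁻¹ * volume.real (Function.support F) := by
        rw [integral_indicator (measurableSet_support hm), setIntegral_const, smul_eq_mul,
          mul_comm]

end Integrability

section Size

variable {F : ℝ × ℝ → ℝ}

lemma Msize_nonneg (F : ℝ × ℝ → ℝ) (C : Set (ℤ × ℤ × ℤ)) : 0 ≤ Msize F C :=
  Real.iSup_nonneg fun _ => Real.sqrt_nonneg _

lemma bddAbove_sqrt_convTheta (C : Finset (ℤ × ℤ × ℤ)) (hF : Nice F) :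
    BddAbove (range fun w : Omega (C : Set (ℤ × ℤ × ℤ)) =>
      Real.sqrt (convTheta F w.1.1.1 w.1.1.2 w.1.2)) := by
  obtain ⟨hm, ⟨CF, hCF⟩, hsupp, -⟩ := hF
  set B : ℝ := ∑ a ∈ C, (((2 : ℝ) ^ a.1 / 2) ^ 2)⁻¹
  refine ⟨Real.sqrt (CF ^ 2 * B * volume.real (Function.support F)), ?_⟩
  rintro _ ⟨⟨⟨⟨p, q⟩, t⟩, hw⟩, rfl⟩
  obtain ⟨a, ha, -, ht, -⟩ := mem_iUnion₂.1 hw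
  have hB : (t ^ 2)⁻¹ ≤ B :=
    calc (t ^ 2)⁻¹ ≤ (((2 : ℝ) ^ a.1 / 2) ^ 2)⁻¹ :=
          inv_anti₀ (by positivity) (pow_le_pow_left₀ (by positivity) ht 2)
      _ ≤ B := Finset.single_le_sum (f := fun a : ℤ × ℤ × ℤ => (((2 : ℝ) ^ a.1 / 2) ^ 2)⁻¹)
          (fun _ _ => by positivity) ha
  refine Real.sqrt_le_sqrt ((convTheta_le hm hCF hsupp p q t).trans ?_)
  gcongr

lemma convTheta_le_Msize_sq (C : Finset (ℤ × ℤ × ℤ)) (hF : Nice F) {p q t : ℝ}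
    (hw : ((p, q), t) ∈ Omega (C : Set (ℤ × ℤ × ℤ))) :
    convTheta F p q t ≤ Msize F C ^ 2 := by
  rw [← Real.sqrt_le_left (Msize_nonneg F C)]
  exact le_ciSup (bddAbove_sqrt_convTheta C hF) ⟨((p, q), t), hw⟩

end Size

lemma abs_intCast_sub_floor_div_le {s t u x : ℝ} {m : ℤ} (ht : 0 < t) (hts : t ≤ s)
    (hx : x ∈ Icc (s * m) (s * (m + 1))) : |((m - ⌊u / s⌋ : ℤ) : ℝ)| ≤ |(u - x) / t| + 1 := by
  have hs : 0 < s := ht.trans_le hts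
  have hx₁ : (m : ℝ) ≤ x / s := (le_div_iff₀ hs).2 (by linarith [hx.1])
  have hx₂ : x / s ≤ m + 1 := (div_le_iff₀ hs).2 (by linarith [hx.2])
  have hu := Int.floor_le (u / s)
  have hu' := Int.lt_floor_add_one (u / s)
  have hscale : |u / s - x / s| ≤ |(u - x) / t| := by
    rw [← sub_div, abs_div, abs_div, abs_of_pos hs, abs_of_pos ht]
    exact div_le_div_of_nonneg_left (abs_nonneg _) ht hts
  push_cast
  refine le_trans ?_ (add_le_add_left hscale 1)
  rw [abs_le]
  constructor <;> cases abs_cases (u / s - x / s) <;> linarith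

lemma abs_sub_div_le_one {s x : ℝ} {m : ℤ} (hs : 0 < s) (hx : x ∈ Icc (s * m) (s * (m + 1))) :
    |(s * m - x) / s| ≤ 1 := by
  rw [abs_div, abs_of_pos hs, div_le_one hs, abs_le]
  constructor <;> linarith [hx.1, hx.2]

def decay (j : ℤ) : ℝ := (1 + (j : ℝ) ^ 2)⁻¹

lemma decay_pos (j : ℤ) : 0 < decay j := by
  rw [decay]; positivity

lemma inv_one_add_sq_sq_le {d₁ d₂ j₁ j₂ : ℝ} (h₁ : |j₁| ≤ |d₁| + 1) (h₂ : |j₂| ≤ |d₂| + 1) :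
    (1 + (d₁ ^ 2 + d₂ ^ 2) ^ 2)⁻¹ ≤ 15 * ((1 + j₁ ^ 2)⁻¹ * (1 + j₂ ^ 2)⁻¹) := by
  set X := d₁ ^ 2 + d₂ ^ 2
  have hsq : ∀ {j d : ℝ}, |j| ≤ |d| + 1 → 1 + j ^ 2 ≤ 3 + 2 * d ^ 2 := fun {j d} h => by
    have := pow_le_pow_left₀ (abs_nonneg j) h 2
    rw [sq_abs] at this
    nlinarith [sq_abs d, sq_nonneg (|d| - 1)]
  have hprod : (1 + j₁ ^ 2) * (1 + j₂ ^ 2) ≤ 15 * (1 + X ^ 2) :=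
    calc (1 + j₁ ^ 2) * (1 + j₂ ^ 2) ≤ (3 + 2 * X) * (3 + 2 * X) :=
          mul_le_mul (by linarith [hsq h₁, sq_nonneg d₂]) (by linarith [hsq h₂, sq_nonneg d₁])
            (by positivity) (by positivity)
      _ ≤ 15 * (1 + X ^ 2) := by nlinarith [sq_nonneg (X - 1)]
  rw [← mul_inv, ← div_eq_mul_inv, le_div_iff₀ (by positivity), mul_comm,
    ← div_eq_mul_inv, div_le_iff₀ (by positivity)]
  linarith

lemma thetaKernel_le_of_mem_dSq {a : ℤ × ℤ × ℤ} {t : ℝ} (ht₁ : (2 : ℝ) ^ a.1 / 2 ≤ t)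
    (ht₂ : t ≤ (2 : ℝ) ^ a.1) {z : ℝ × ℝ} (hz : z ∈ dSq a) (p q : ℝ) :
    thetaKernel p q t z ≤
      300 * (decay (a.2.1 - ⌊p / 2 ^ a.1⌋) * decay (a.2.2 - ⌊q / 2 ^ a.1⌋)) *
        thetaKernel (2 ^ a.1 * a.2.1) (2 ^ a.1 * a.2.2) (2 ^ a.1) z := by
  set s : ℝ := 2 ^ a.1
  have hs : 0 < s := by positivity
  have ht : 0 < t := lt_of_lt_of_le (by positivity) ht₁
  obtain ⟨hz₁, hz₂⟩ := hz
  have hdecay := inv_one_add_sq_sq_le (abs_intCast_sub_floor_div_le (u := p) ht ht₂ hz₁)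
    (abs_intCast_sub_floor_div_le (u := q) ht ht₂ hz₂)
  have hcorner := inv_five_le_theta (abs_sub_div_le_one hs hz₁) (abs_sub_div_le_one hs hz₂)
  have hscale : (t ^ 2)⁻¹ ≤ 4 * (s ^ 2)⁻¹ :=
    calc (t ^ 2)⁻¹ ≤ ((s / 2) ^ 2)⁻¹ :=
          inv_anti₀ (by positivity) (pow_le_pow_left₀ (by positivity) ht₁ 2)
      _ = 4 * (s ^ 2)⁻¹ := by ring
  have hW := mul_pos (decay_pos (a.2.1 - ⌊p / s⌋)) (decay_pos (a.2.2 - ⌊q / s⌋))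
  rw [thetaKernel, thetaKernel, theta_eq]
  calc (t ^ 2)⁻¹ * (1 + (((p - z.1) / t) ^ 2 + ((q - z.2) / t) ^ 2) ^ 2)⁻¹
      ≤ 4 * (s ^ 2)⁻¹ * (15 * (decay (a.2.1 - ⌊p / s⌋) * decay (a.2.2 - ⌊q / s⌋))) :=
        mul_le_mul hscale hdecay (by positivity) (by positivity)
    _ = 300 * (decay (a.2.1 - ⌊p / s⌋) * decay (a.2.2 - ⌊q / s⌋)) * ((s ^ 2)⁻¹ * 5⁻¹) := by
        ring
    _ ≤ _ := by gcongr

lemma summable_decay : Summable decay := by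
  refine Summable.of_norm_bounded_eventually (Real.summable_one_div_int_pow.2 one_lt_two) ?_
  filter_upwards [Filter.eventually_cofinite_ne 0] with j hj
  rw [Real.norm_of_nonneg (decay_pos j).le, decay, one_div]
  exact inv_anti₀ (by positivity) (le_add_of_nonneg_left zero_le_one)

lemma sum_decay_mul_decay_le (s : Finset (ℤ × ℤ)) (c d : ℤ) :
    ∑ b ∈ s, decay (b.1 - c) * decay (b.2 - d) ≤ (∑' j, decay j) ^ 2 := by
  have hprod : Summable fun b : ℤ × ℤ => decay b.1 * decay b.2 :=
    summable_decay.mul_of_nonneg summable_decay (fun j => (decay_pos j).le)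
      (fun j => (decay_pos j).le)
  calc ∑ b ∈ s, decay (b.1 - c) * decay (b.2 - d)
      ≤ ∑' b : ℤ × ℤ, decay (b.1 - c) * decay (b.2 - d) :=
        ((Equiv.subRight (c, d)).summable_iff.2 hprod).sum_le_tsum s
          fun b _ => (mul_pos (decay_pos _) (decay_pos _)).le
    _ = ∑' b : ℤ × ℤ, decay b.1 * decay b.2 :=
        (Equiv.subRight (c, d)).tsum_eq fun b : ℤ × ℤ => decay b.1 * decay b.2
    _ = (∑' j, decay j) ^ 2 := by rw [sq, summable_decay.tsum_mul_tsum summable_decay hprod]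

lemma integral_indicator_biUnion_le_sum {X ι : Type*} [MeasurableSpace X] {μ : Measure X}
    (t : Finset ι) {s : ι → Set X} (hs : ∀ i ∈ t, MeasurableSet (s i)) {f : X → ℝ}
    (hf : Integrable f μ) (hf₀ : 0 ≤ f) :
    ∫ x, (⋃ i ∈ t, s i).indicator f x ∂μ ≤ ∑ i ∈ t, ∫ x in s i, f x ∂μ := by
  have hpiece : ∀ i ∈ t, Integrable ((s i).indicator f) μ := fun i hi => hf.indicator (hs i hi)
  have hcover : ∀ x, (⋃ i ∈ t, s i).indicator f x ≤ ∑ i ∈ t, (s i).indicator f x := by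
    intro x
    have hterms : ∀ i ∈ t, 0 ≤ (s i).indicator f x := fun i _ =>
      indicator_nonneg (fun y _ => hf₀ y) x
    by_cases hx : x ∈ ⋃ i ∈ t, s i
    · obtain ⟨i, hi, hxi⟩ := mem_iUnion₂.1 hx
      rw [indicator_of_mem hx, ← indicator_of_mem hxi f]
      exact Finset.single_le_sum hterms hi
    · rw [indicator_of_notMem hx]
      exact Finset.sum_nonneg hterms
  calc ∫ x, (⋃ i ∈ t, s i).indicator f x ∂μ
      ≤ ∫ x, ∑ i ∈ t, (s i).indicator f x ∂μ :=
        integral_mono_of_nonneg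
          (Filter.Eventually.of_forall (indicator_nonneg fun y _ => hf₀ y))
          (integrable_finsetSum t hpiece) (Filter.Eventually.of_forall hcover)
    _ = ∑ i ∈ t, ∫ x in s i, f x ∂μ := by
        rw [integral_finsetSum t hpiece]
        exact Finset.sum_congr rfl fun i hi => integral_indicator (hs i hi)

lemma measurableSet_dSq (a : ℤ × ℤ × ℤ) : MeasurableSet (dSq a) :=
  measurableSet_Icc.prod measurableSet_Icc

lemma corner_mem_Omega {C : Set (ℤ × ℤ × ℤ)} {a : ℤ × ℤ × ℤ} (ha : a ∈ C) :
    ((2 ^ a.1 * (a.2.1 : ℝ), 2 ^ a.1 * (a.2.2 : ℝ)), (2 : ℝ) ^ a.1) ∈ Omega C := by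
  have hs : (0 : ℝ) < 2 ^ a.1 := by positivity
  refine mem_iUnion₂.2 ⟨a, ha, ⟨⟨le_rfl, ?_⟩, le_rfl, ?_⟩, by linarith, le_rfl⟩ <;>
    linarith

lemma setIntegral_dSq_le {F : ℝ × ℝ → ℝ} (hF : Nice F) {C : Finset (ℤ × ℤ × ℤ)}
    {a : ℤ × ℤ × ℤ} (ha : a ∈ C) {t : ℝ} (ht₁ : (2 : ℝ) ^ a.1 / 2 ≤ t)
    (ht₂ : t ≤ (2 : ℝ) ^ a.1) (p q : ℝ) :
    ∫ z in dSq a, F z ^ 2 * thetaKernel p q t z ≤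
      300 * (decay (a.2.1 - ⌊p / 2 ^ a.1⌋) * decay (a.2.2 - ⌊q / 2 ^ a.1⌋)) *
        Msize F C ^ 2 := by
  set c := 300 * (decay (a.2.1 - ⌊p / 2 ^ a.1⌋) * decay (a.2.2 - ⌊q / 2 ^ a.1⌋))
  have hc : 0 ≤ c := mul_nonneg (by norm_num) (mul_pos (decay_pos _) (decay_pos _)).le
  set K := thetaKernel (2 ^ a.1 * a.2.1) (2 ^ a.1 * a.2.2) (2 ^ a.1)
  calc ∫ z in dSq a, F z ^ 2 * thetaKernel p q t z
      ≤ ∫ z in dSq a, c * (F z ^ 2 * K z) :=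
        setIntegral_mono_on (integrable_sq_mul_thetaKernel hF p q t).integrableOn
          ((integrable_sq_mul_thetaKernel hF _ _ _).const_mul c).integrableOn
          (measurableSet_dSq a) fun z hz => by
            rw [mul_left_comm]
            exact mul_le_mul_of_nonneg_left (thetaKernel_le_of_mem_dSq ht₁ ht₂ hz p q)
              (sq_nonneg _)
    _ = c * ∫ z in dSq a, F z ^ 2 * K z := integral_const_mul c _
    _ ≤ c * convTheta F _ _ _ :=
        mul_le_mul_of_nonneg_left (setIntegral_le_integral
          (integrable_sq_mul_thetaKernel hF _ _ _) (Filter.Eventually.of_forall fun z =>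
            mul_nonneg (sq_nonneg _) (thetaKernel_nonneg _ _ _ z))) hc
    _ ≤ c * Msize F C ^ 2 :=
        mul_le_mul_of_nonneg_left (convTheta_le_Msize_sq C hF (corner_mem_Omega ha)) hc

lemma Tk_eq_biUnion (T : ConvexTree) (k : ℤ) :
    Tk T k = ⋃ a ∈ T.squares.filter (·.1 = k), dSq a := by
  ext z
  simp [Tk, treeLevel]

lemma convTheta_indicator_Tk_le (T : ConvexTree) (k : ℤ) {F : ℝ × ℝ → ℝ} (hF : Nice F)
    {t : ℝ} (ht₁ : (2 : ℝ) ^ k / 2 ≤ t) (ht₂ : t ≤ (2 : ℝ) ^ k) (p q : ℝ) :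
    convTheta ((Tk T k).indicator F) p q t ≤
      300 * (∑' j, decay j) ^ 2 * Msize F T.squares ^ 2 := by
  set level := T.squares.filter (·.1 = k)
  set M := Msize F T.squares
  set W : ℤ × ℤ → ℝ := fun b => decay (b.1 - ⌊p / 2 ^ k⌋) * decay (b.2 - ⌊q / 2 ^ k⌋)
  have hpieces : ∀ a ∈ level,
      ∫ z in dSq a, F z ^ 2 * thetaKernel p q t z ≤ 300 * W a.2 * M ^ 2 := fun a ha => by
    obtain ⟨haT, rfl⟩ := Finset.mem_filter.1 ha
    exact setIntegral_dSq_le hF haT ht₁ ht₂ p q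
  have hweights : ∑ a ∈ level, W a.2 ≤ (∑' j, decay j) ^ 2 := by
    have hinj : Set.InjOn Prod.snd (level : Set (ℤ × ℤ × ℤ)) := fun a ha b hb hab =>
      Prod.ext ((Finset.mem_filter.1 ha).2.trans (Finset.mem_filter.1 hb).2.symm) hab
    rw [← Finset.sum_image hinj]
    exact sum_decay_mul_decay_le _ _ _
  calc convTheta ((Tk T k).indicator F) p q t
      = ∫ z, (Tk T k).indicator (fun z => F z ^ 2 * thetaKernel p q t z) z := by
        refine integral_congr_ae (Filter.Eventually.of_forall fun z => ?_)
        by_cases hz : z ∈ Tk T k <;> simp [hz, thetaKernel]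
    _ ≤ ∑ a ∈ level, ∫ z in dSq a, F z ^ 2 * thetaKernel p q t z := by
        rw [Tk_eq_biUnion]
        exact integral_indicator_biUnion_le_sum level (fun a _ => measurableSet_dSq a)
          (integrable_sq_mul_thetaKernel hF p q t)
          fun z => mul_nonneg (sq_nonneg _) (thetaKernel_nonneg p q t z)
    _ ≤ ∑ a ∈ level, 300 * W a.2 * M ^ 2 := Finset.sum_le_sum hpieces
    _ = 300 * (∑ a ∈ level, W a.2) * M ^ 2 := by rw [Finset.mul_sum, Finset.sum_mul]
    _ ≤ 300 * (∑' j, decay j) ^ 2 * M ^ 2 := by gcongr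

/-- The claim `M(F·1_{T_k}, 𝒯_k^c) ≲ M(F,𝒯)` together with its pointwise form. -/
theorem Msize_indicator_le : ∃ C : ℝ, 0 < C ∧
    ∀ (T : ConvexTree) (k : ℤ) (F : ℝ × ℝ → ℝ), Nice F →
      (Msize ((Tk T k).indicator F) {a : ℤ × ℤ × ℤ | a.1 = k ∧ a ∉ T.squares} ≤
        C * Msize F (T.squares : Set (ℤ × ℤ × ℤ))) ∧
      ∀ p q t : ℝ, ((p, q), t) ∈ Omega {a : ℤ × ℤ × ℤ | a.1 = k ∧ a ∉ T.squares} →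
        Real.sqrt (convTheta ((Tk T k).indicator F) p q t) ≤
          C * Msize F (T.squares : Set (ℤ × ℤ × ℤ)) := by
  have hS : 0 < ∑' j, decay j :=
    summable_decay.tsum_pos (fun j => (decay_pos j).le) 0 (decay_pos 0)
  refine ⟨Real.sqrt (300 * (∑' j, decay j) ^ 2), by positivity, fun T k F hF => ?_⟩
  have hpointwise : ∀ p q t : ℝ,
      ((p, q), t) ∈ Omega {a : ℤ × ℤ × ℤ | a.1 = k ∧ a ∉ T.squares} →
      Real.sqrt (convTheta ((Tk T k).indicator F) p q t) ≤
        Real.sqrt (300 * (∑' j, decay j) ^ 2) * Msize F T.squares := by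
    intro p q t hw
    obtain ⟨a, ⟨rfl, -⟩, -, ht₁, ht₂⟩ := mem_iUnion₂.1 hw
    rw [← Real.sqrt_sq (Msize_nonneg F _), ← Real.sqrt_mul (by positivity)]
    exact Real.sqrt_le_sqrt (convTheta_indicator_Tk_le T a.1 hF ht₁ ht₂ p q)
  exact ⟨Real.iSup_le (fun w => hpointwise _ _ _ w.2)
    (mul_nonneg (Real.sqrt_nonneg _) (Msize_nonneg F _)), hpointwise⟩

end
end

section
/- Let g_α(x) := (√π · α)^{-1} e^{-(x/α)²} for α > 0 and h_γ(x) := γ · g_γ'(x) for γ > 0. Then for every α, γ > 0, every finite collection 𝒞 of dyadic squares, and every bounded, real-valued, measurable function F on ℝ² with finite measure support, Θ^𝒞_{g_α, h_γ}(F,F,F,F) ≥ 0. -/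
/-!
For fixed `t > 0` put `g(x) = [g_α]_t(p - x) ≥ 0` and `h(y) = [h_γ]_t(q - y)`, both integrable.
Integrating out `y'` and then exchanging the `y` and `x'` integrations (Fubini, legitimate since
`F` is bounded and `g`, `h` are integrable) turns the entangled quartic form into
`∫∫ g(x) g(x') K(x, x')² dx dx'` with `K(x, x') = ∫ F(x, y) F(x', y) h(y) dy`, which is
nonnegative because `g` is. Integrating over `Ω_𝒞` against `dt / t` keeps the sign.
-/

open MeasureTheory Set

noncomputable section

/-- The `L¹`-normalized Gaussian rescaled by `α > 0`. -/
def gauss (α : ℝ) (x : ℝ) : ℝ := (Real.sqrt Real.pi * α)⁻¹ * Real.exp (-(x/α)^2)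

/-- `h_γ = γ (g_γ)'`. -/
def hGauss (γ : ℝ) (x : ℝ) : ℝ := γ * deriv (gauss γ) x

section EntangledQuadraticForm

variable {X Y : Type*} [MeasurableSpace Y] {ν : Measure Y} {F : X × Y → ℝ} {h : Y → ℝ} {B : ℝ}

def entangledKernel (F : X × Y → ℝ) (h : Y → ℝ) (ν : Measure Y) (x x' : X) : ℝ :=
  ∫ y, F (x, y) * F (x', y) * h y ∂ν

lemma abs_entangledKernel_le (hF : ∀ z, |F z| ≤ B) (hh : Integrable h ν) (x x' : X) :
    |entangledKernel F h ν x x'| ≤ B ^ 2 * ∫ y, |h y| ∂ν := by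
  rw [← integral_const_mul]
  refine (abs_integral_le_integral_abs).trans (integral_mono_of_nonneg
    (Filter.Eventually.of_forall fun _ => abs_nonneg _) (hh.abs.const_mul _)
    (Filter.Eventually.of_forall fun y => ?_))
  have hB : 0 ≤ B := (abs_nonneg _).trans (hF (x, y))
  simp only [abs_mul, sq]
  gcongr
  · exact hF _
  · exact hF _

variable [MeasurableSpace X] {μ : Measure X} {g : X → ℝ}

lemma aestronglyMeasurable_entangledKernel [SFinite ν] (hF : Measurable F)
    (hh : AEStronglyMeasurable h ν) (x : X) :
    AEStronglyMeasurable (entangledKernel F h ν x) μ :=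
  AEStronglyMeasurable.integral_prod_right' (f := fun z : X × Y => F (x, z.2) * F z * h z.2)
    (((hF.comp (measurable_const.prodMk measurable_snd)).aestronglyMeasurable.mul
      hF.aestronglyMeasurable).mul hh.comp_snd)

lemma integral_entangled_eq [SFinite μ] [SFinite ν] (hF : Measurable F) (hFB : ∀ z, |F z| ≤ B)
    (hg₀ : 0 ≤ g) (hg : Integrable g μ) (hh : Integrable h ν) (x : X) :
    ∫ y, ∫ x', ∫ y', F (x, y) * F (x', y) * F (x', y') * F (x, y') * g x * h y * g x' * h y'
        ∂ν ∂μ ∂ν = g x * ∫ x', g x' * entangledKernel F h ν x x' ^ 2 ∂μ := by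
  set K := entangledKernel F h ν
  set f : Y → X → ℝ := fun y x' => F (x, y) * h y * (F (x', y) * (g x' * K x x'))
  have hf : Integrable (Function.uncurry f) (ν.prod μ) := by
    refine ((hh.norm.const_mul B).mul_prod (hg.const_mul (B * (B ^ 2 * ∫ y, |h y| ∂ν)))).mono'
      ?_ (Filter.Eventually.of_forall fun z => ?_)
    · exact ((hF.comp (measurable_const.prodMk measurable_fst)).aestronglyMeasurable.mul
        hh.1.comp_fst).mul ((hF.comp measurable_swap).aestronglyMeasurable.mul
        (hg.1.comp_snd.mul (aestronglyMeasurable_entangledKernel hF hh.1 x).comp_snd))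
    · have hB : 0 ≤ B := (abs_nonneg _).trans (hFB (x, z.1))
      simp only [Function.uncurry, f, norm_mul, Real.norm_eq_abs, abs_of_nonneg (hg₀ z.2)]
      calc _ = |F (x, z.1)| * |F (z.2, z.1)| * |K x z.2| * (|h z.1| * g z.2) := by ring
        _ ≤ B * B * (B ^ 2 * ∫ y, |h y| ∂ν) * (|h z.1| * g z.2) := by
          gcongr
          exacts [mul_nonneg (abs_nonneg _) (hg₀ _), hFB _, hFB _,
            abs_entangledKernel_le hFB hh x z.2]
        _ = _ := by ring
  calc _ = ∫ y, ∫ x', g x * f y x' ∂μ ∂ν := by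
        refine integral_congr_ae (Filter.Eventually.of_forall fun y => ?_)
        refine integral_congr_ae (Filter.Eventually.of_forall fun x' => ?_)
        simp only [f, K, entangledKernel, ← integral_const_mul]
        congr 1; ext y'; ring
    _ = g x * ∫ x', ∫ y, f y x' ∂ν ∂μ := by
        simp_rw [integral_const_mul]; rw [integral_integral_swap hf]
    _ = _ := by
        congr 1
        refine integral_congr_ae (Filter.Eventually.of_forall fun x' => ?_)
        simp only [f]
        simp_rw [show ∀ y, F (x, y) * h y * (F (x', y) * (g x' * K x x')) =
          g x' * K x x' * (F (x, y) * F (x', y) * h y) from fun y => by ring]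
        rw [integral_const_mul]
        change _ * K x x' = _
        ring

lemma integral_entangled_nonneg [SFinite μ] [SFinite ν] (hF : Measurable F)
    (hFB : ∀ z, |F z| ≤ B) (hg₀ : 0 ≤ g) (hg : Integrable g μ) (hh : Integrable h ν) :
    0 ≤ ∫ x, ∫ y, ∫ x', ∫ y', F (x, y) * F (x', y) * F (x', y') * F (x, y') *
      g x * h y * g x' * h y' ∂ν ∂μ ∂ν ∂μ := by
  refine integral_nonneg fun x => ?_
  rw [integral_entangled_eq hF hFB hg₀ hg hh]
  exact mul_nonneg (hg₀ x) (integral_nonneg fun x' => mul_nonneg (hg₀ x') (sq_nonneg _))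

end EntangledQuadraticForm

lemma entConv_self_nonneg {φ ψ : ℝ → ℝ} (hφ₀ : 0 ≤ φ) (hφ : Integrable φ) (hψ : Integrable ψ)
    {F : ℝ × ℝ → ℝ} {B : ℝ} (hF : Measurable F) (hFB : ∀ z, |F z| ≤ B) {t : ℝ} (ht : 0 < t)
    (p q : ℝ) : 0 ≤ entConv F F F F φ ψ φ ψ t p q :=
  integral_entangled_nonneg (g := fun x => t⁻¹ * φ ((p - x) / t))
    (h := fun y => t⁻¹ * ψ ((q - y) / t)) hF hFB
    (fun _ => mul_nonneg (inv_nonneg.2 ht.le) (hφ₀ _))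
    (((hφ.comp_div ht.ne').comp_sub_left p).const_mul _)
    (((hψ.comp_div ht.ne').comp_sub_left q).const_mul _)

lemma measurableSet_Omega (C : Set (ℤ × ℤ × ℤ)) : MeasurableSet (Omega C) :=
  MeasurableSet.biUnion C.to_countable fun _ _ =>
    (measurableSet_Icc.prod measurableSet_Icc).prod measurableSet_Icc

lemma pos_of_mem_Omega {C : Set (ℤ × ℤ × ℤ)} {w : (ℝ × ℝ) × ℝ} (hw : w ∈ Omega C) : 0 < w.2 := by
  obtain ⟨a, -, hwa⟩ := mem_iUnion₂.1 hw
  exact (by positivity : (0 : ℝ) < 2 ^ a.1 / 2).trans_le hwa.2.1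

lemma Theta_self_nonneg (C : Set (ℤ × ℤ × ℤ)) {φ ψ : ℝ → ℝ} (hφ₀ : 0 ≤ φ) (hφ : Integrable φ)
    (hψ : Integrable ψ) {F : ℝ × ℝ → ℝ} {B : ℝ} (hF : Measurable F) (hFB : ∀ z, |F z| ≤ B) :
    0 ≤ Theta C φ ψ φ ψ F F F F :=
  setIntegral_nonneg (measurableSet_Omega C) fun _ hw =>
    div_nonneg (entConv_self_nonneg hφ₀ hφ hψ hF hFB (pos_of_mem_Omega hw) _ _)
      (pos_of_mem_Omega hw).le

lemma gauss_nonneg {α : ℝ} (hα : 0 ≤ α) (x : ℝ) : 0 ≤ gauss α x :=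
  mul_nonneg (inv_nonneg.2 (mul_nonneg (Real.sqrt_nonneg _) hα)) (Real.exp_pos _).le

lemma gauss_eq_const_mul_exp (α : ℝ) :
    gauss α = fun x => (Real.sqrt Real.pi * α)⁻¹ * Real.exp (-(α ^ 2)⁻¹ * x ^ 2) := by
  ext x
  rw [gauss]
  ring_nf

lemma integrable_gauss (α : ℝ) : Integrable (gauss α) := by
  rcases eq_or_ne α 0 with rfl | hα
  · exact (integrable_zero ℝ ℝ volume).congr (Filter.Eventually.of_forall fun _ => by simp [gauss])
  · rw [gauss_eq_const_mul_exp]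
    exact (integrable_exp_neg_mul_sq (by positivity)).const_mul _

lemma hasDerivAt_gauss (α x : ℝ) : HasDerivAt (gauss α) (-(2 * x / α ^ 2) * gauss α x) x := by
  have hexp : HasDerivAt (fun y => -(y / α) ^ 2) (-(2 * x / α ^ 2)) x :=
    (((hasDerivAt_id' x).div_const α).fun_pow 2).neg.congr_deriv (by ring)
  exact (hexp.exp.const_mul _).congr_deriv (by rw [gauss]; ring)

lemma integrable_hGauss (γ : ℝ) : Integrable (hGauss γ) := by
  rcases eq_or_ne γ 0 with rfl | hγ
  · exact (integrable_zero ℝ ℝ volume).congr (Filter.Eventually.of_forall fun _ => by simp [hGauss])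
  · have : hGauss γ = fun x => (γ * -(2 / γ ^ 2) * (Real.sqrt Real.pi * γ)⁻¹) *
        (x * Real.exp (-(γ ^ 2)⁻¹ * x ^ 2)) := by
      ext x
      rw [hGauss, (hasDerivAt_gauss γ x).deriv, gauss_eq_const_mul_exp]
      ring
    rw [this]
    exact (integrable_mul_exp_neg_mul_sq (by positivity)).const_mul _

theorem Theta_gauss_nonneg_general (α γ : ℝ) (hα : 0 < α)
    (C : Finset (ℤ × ℤ × ℤ)) (F : ℝ × ℝ → ℝ) (hm : Measurable F)
    (hb : ∃ B : ℝ, ∀ z, |F z| ≤ B) :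
    0 ≤ Theta (C : Set (ℤ × ℤ × ℤ)) (gauss α) (hGauss γ) (gauss α) (hGauss γ) F F F F := by
  obtain ⟨B, hB⟩ := hb
  exact Theta_self_nonneg _ (gauss_nonneg hα.le) (integrable_gauss α) (integrable_hGauss γ) hm hB

/-- Positivity of `Θ^𝒞_{g_α, h_γ}(F,F,F,F)`. -/
theorem Theta_gauss_nonneg (α γ : ℝ) (hα : 0 < α) (hγ : 0 < γ)
    (C : Finset (ℤ × ℤ × ℤ)) (F : ℝ × ℝ → ℝ) (hm : Measurable F)
    (hb : ∃ B : ℝ, ∀ z, |F z| ≤ B) (hs : volume (Function.support F) < ⊤) :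
    0 ≤ Theta (C : Set (ℤ × ℤ × ℤ)) (gauss α) (hGauss γ) (gauss α) (hGauss γ) F F F F :=
  Theta_gauss_nonneg_general α γ hα C F hm hb

end
end

section
/- Let F₁,F₂,F₃,F₄ be bounded, positive, measurable functions on ℝ² with finite measure support, let F denote their entangled product, and for (p,q) ∈ ℝ², t > 0 set A^{(p,q,t)}(F₁,F₂,F₃,F₄) := F * [ϑ⊗ϑ⊗ϑ⊗ϑ]_t(p,q,p,q). Then A^{(p,q,t)}(F₁,F₂,F₃,F₄) ≤ A^{(p,q,t)}(F₁,F₂,F₂,F₁)^{1/2} · A^{(p,q,t)}(F₄,F₃,F₃,F₄)^{1/2}, and moreover for a single function F, A^{(p,q,t)}(F,F,F,F) ≤ (F² * [ϑ⊗ϑ]_t(p,q))². -/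
/-!
Put `L(x, x') = ∫ F₁(x, y) F₂(x', y) dν(y)` for the pairing of two slices. Integrating out `y` and
`y'` first writes the box form as `∫∫ L₁₂(x, x') L₄₃(x, x') dμ(x) dμ(x')`, so Cauchy–Schwarz in
`(x, x')` gives the first inequality, the two factors being the box forms of `(F₁, F₂, F₂, F₁)` and
`(F₄, F₃, F₃, F₄)`. For the second, Cauchy–Schwarz in `y` gives `L(x, x')² ≤ L(x, x) L(x', x')`,
and `∫ L(x, x) dμ(x) = ∫ F² d(μ × ν)`.

The kernels `[ϑ]_t(p - ·)` and `[ϑ]_t(q - ·)` are absorbed into finite measures `μ` and `ν`. The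
inequalities are proved for `ℝ≥0∞`-valued integrals; boundedness of the `Fᵢ` makes every partial
integral finite, so the real iterated integrals are their `toReal`s.
-/
open MeasureTheory Set

noncomputable section

open ENNReal

namespace MeasureTheory

variable {α β : Type*} [MeasurableSpace α] [MeasurableSpace β] {μ : Measure α} {ν : Measure β}

theorem lintegral_mul_sq_le {u v : α → ℝ≥0∞} (hu : AEMeasurable u μ) (hv : AEMeasurable v μ) :
    (∫⁻ a, u a * v a ∂μ) ^ 2 ≤ (∫⁻ a, u a * u a ∂μ) * ∫⁻ a, v a * v a ∂μ := by
  have hsq (r : ℝ≥0∞) : r ^ (2 : ℝ) = r * r := by rw [rpow_two, sq]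
  have hHolder := lintegral_mul_le_Lp_mul_Lq μ Real.HolderConjugate.two_two hu hv
  simp only [Pi.mul_apply, hsq] at hHolder
  calc (∫⁻ a, u a * v a ∂μ) ^ 2
      ≤ ((∫⁻ a, u a * u a ∂μ) ^ (1 / 2 : ℝ) * (∫⁻ a, v a * v a ∂μ) ^ (1 / 2 : ℝ)) ^ 2 := by
        gcongr
    _ = (∫⁻ a, u a * u a ∂μ) * ∫⁻ a, v a * v a ∂μ := by
        rw [mul_pow, ← rpow_mul_natCast, ← rpow_mul_natCast]
        norm_num

theorem lintegral_lintegral_le_of_le {Φ : α → β → ℝ≥0∞} {C : ℝ≥0∞} (hΦ : ∀ a b, Φ a b ≤ C) :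
    ∫⁻ a, ∫⁻ b, Φ a b ∂ν ∂μ ≤ C * ν univ * μ univ :=
  calc ∫⁻ a, ∫⁻ b, Φ a b ∂ν ∂μ ≤ ∫⁻ _, C * ν univ ∂μ :=
        lintegral_mono fun a => (lintegral_mono (hΦ a)).trans_eq (lintegral_const C)
    _ = C * ν univ * μ univ := lintegral_const _

theorem integral_integral_toReal [IsFiniteMeasure ν] {Φ : α → β → ℝ≥0∞}
    (hΦ : Measurable (Function.uncurry Φ)) {C : ℝ≥0∞} (hC : C ≠ ⊤) (hΦC : ∀ a b, Φ a b ≤ C) :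
    ∫ a, ∫ b, (Φ a b).toReal ∂ν ∂μ = (∫⁻ a, ∫⁻ b, Φ a b ∂ν ∂μ).toReal := by
  have hinner (a : α) : ∫ b, (Φ a b).toReal ∂ν = (∫⁻ b, Φ a b ∂ν).toReal :=
    integral_toReal (by fun_prop) (ae_of_all _ fun b => (hΦC a b).trans_lt hC.lt_top)
  have hfinite (a : α) : ∫⁻ b, Φ a b ∂ν < ⊤ :=
    ((lintegral_mono (hΦC a)).trans_eq (lintegral_const C)).trans_lt
      (mul_lt_top hC.lt_top (measure_lt_top ν univ))
  simp only [hinner]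
  exact integral_toReal (by fun_prop) (ae_of_all _ hfinite)

theorem integral_withDensity_ofReal {w : α → ℝ} (hw : Measurable w) (hw₀ : ∀ a, 0 ≤ w a)
    (g : α → ℝ) : ∫ a, g a ∂μ.withDensity (fun a => ENNReal.ofReal (w a)) = ∫ a, w a * g a ∂μ := by
  rw [integral_withDensity_eq_integral_toReal_smul hw.ennreal_ofReal
    (ae_of_all _ fun _ => ofReal_lt_top)]
  simp only [toReal_ofReal (hw₀ _), smul_eq_mul]

end MeasureTheory

section Box

variable {X Y : Type*} {F₁ F₂ F₃ F₄ : X × Y → ℝ} {C₁ C₂ C₃ C₄ : ℝ}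

theorem ofReal_box_le (hF₁ : ∀ z, F₁ z ≤ C₁) (hF₂ : ∀ z, F₂ z ≤ C₂) (hF₃ : ∀ z, F₃ z ≤ C₃)
    (hF₄ : ∀ z, F₄ z ≤ C₄) (x x' : X) (y y' : Y) :
    ENNReal.ofReal (F₁ (x, y)) * ENNReal.ofReal (F₂ (x', y)) * ENNReal.ofReal (F₃ (x', y')) *
        ENNReal.ofReal (F₄ (x, y')) ≤
      ENNReal.ofReal C₁ * ENNReal.ofReal C₂ * ENNReal.ofReal C₃ * ENNReal.ofReal C₄ := by
  gcongr <;> apply_assumption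

variable [MeasurableSpace X] [MeasurableSpace Y] (μ : Measure X) (ν : Measure Y)

def boxIntegral (F₁ F₂ F₃ F₄ : X × Y → ℝ) : ℝ :=
  ∫ x, ∫ y, ∫ x', ∫ y', F₁ (x, y) * F₂ (x', y) * F₃ (x', y') * F₄ (x, y') ∂ν ∂μ ∂ν ∂μ

def boxLIntegral (f₁ f₂ f₃ f₄ : X × Y → ℝ≥0∞) : ℝ≥0∞ :=
  ∫⁻ x, ∫⁻ y, ∫⁻ x', ∫⁻ y', f₁ (x, y) * f₂ (x', y) * f₃ (x', y') * f₄ (x, y') ∂ν ∂μ ∂ν ∂μ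

def slicePairing (f g : X × Y → ℝ≥0∞) (z : X × X) : ℝ≥0∞ :=
  ∫⁻ y, f (z.1, y) * g (z.2, y) ∂ν

variable {μ ν} {f g f₁ f₂ f₃ f₄ : X × Y → ℝ≥0∞}

theorem slicePairing_sq_le (hf : Measurable f) (z : X × X) :
    slicePairing ν f f z ^ 2 ≤ slicePairing ν f f (z.1, z.1) * slicePairing ν f f (z.2, z.2) :=
  lintegral_mul_sq_le (by fun_prop) (by fun_prop)

section SFinite

variable [SFinite μ] [SFinite ν]

theorem measurable_slicePairing (hf : Measurable f) (hg : Measurable g) :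
    Measurable (slicePairing ν f g) := by
  unfold slicePairing
  fun_prop

theorem boxLIntegral_eq_lintegral_slicePairing (hf₁ : Measurable f₁) (hf₂ : Measurable f₂)
    (hf₃ : Measurable f₃) (hf₄ : Measurable f₄) :
    boxLIntegral μ ν f₁ f₂ f₃ f₄ =
      ∫⁻ z, slicePairing ν f₁ f₂ z * slicePairing ν f₄ f₃ z ∂μ.prod μ := by
  have h₁₂ := measurable_slicePairing (ν := ν) hf₁ hf₂
  have h₄₃ := measurable_slicePairing (ν := ν) hf₄ hf₃
  rw [lintegral_prod _ (by fun_prop), boxLIntegral]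
  refine lintegral_congr fun x => ?_
  have hinner (y : Y) (x' : X) :
      ∫⁻ y', f₁ (x, y) * f₂ (x', y) * f₃ (x', y') * f₄ (x, y') ∂ν =
        f₁ (x, y) * f₂ (x', y) * slicePairing ν f₄ f₃ (x, x') := by
    rw [slicePairing, ← lintegral_const_mul _ (by fun_prop)]
    simp only [mul_assoc, mul_comm (f₄ _)]
  calc ∫⁻ y, ∫⁻ x', ∫⁻ y', f₁ (x, y) * f₂ (x', y) * f₃ (x', y') * f₄ (x, y') ∂ν ∂μ ∂ν
      = ∫⁻ y, ∫⁻ x', f₁ (x, y) * f₂ (x', y) * slicePairing ν f₄ f₃ (x, x') ∂μ ∂ν := by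
        simp only [hinner]
    _ = ∫⁻ x', ∫⁻ y, f₁ (x, y) * f₂ (x', y) * slicePairing ν f₄ f₃ (x, x') ∂ν ∂μ :=
        lintegral_lintegral_swap (by fun_prop)
    _ = ∫⁻ x', slicePairing ν f₁ f₂ (x, x') * slicePairing ν f₄ f₃ (x, x') ∂μ := by
        simp only [slicePairing]
        exact lintegral_congr fun x' => lintegral_mul_const _ (by fun_prop)

theorem boxLIntegral_sq_le (hf₁ : Measurable f₁) (hf₂ : Measurable f₂) (hf₃ : Measurable f₃)
    (hf₄ : Measurable f₄) :
    boxLIntegral μ ν f₁ f₂ f₃ f₄ ^ 2 ≤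
      boxLIntegral μ ν f₁ f₂ f₂ f₁ * boxLIntegral μ ν f₄ f₃ f₃ f₄ := by
  rw [boxLIntegral_eq_lintegral_slicePairing hf₁ hf₂ hf₃ hf₄,
    boxLIntegral_eq_lintegral_slicePairing hf₁ hf₂ hf₂ hf₁,
    boxLIntegral_eq_lintegral_slicePairing hf₄ hf₃ hf₃ hf₄]
  exact lintegral_mul_sq_le (measurable_slicePairing hf₁ hf₂).aemeasurable
    (measurable_slicePairing hf₄ hf₃).aemeasurable

theorem boxLIntegral_self_le (hf : Measurable f) :
    boxLIntegral μ ν f f f f ≤ (∫⁻ z, f z ^ 2 ∂μ.prod ν) ^ 2 := by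
  have hdiag : Measurable fun x => slicePairing ν f f (x, x) :=
    (measurable_slicePairing hf hf).comp (measurable_id.prodMk measurable_id)
  calc boxLIntegral μ ν f f f f
      = ∫⁻ z, slicePairing ν f f z ^ 2 ∂μ.prod μ := by
        simp only [boxLIntegral_eq_lintegral_slicePairing hf hf hf hf, sq]
    _ ≤ ∫⁻ z, slicePairing ν f f (z.1, z.1) * slicePairing ν f f (z.2, z.2) ∂μ.prod μ :=
        lintegral_mono (slicePairing_sq_le hf)
    _ = (∫⁻ z, f z ^ 2 ∂μ.prod ν) ^ 2 := by
        rw [lintegral_prod_mul hdiag.aemeasurable hdiag.aemeasurable, ← sq,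
          lintegral_prod _ (by fun_prop)]
        simp only [slicePairing, sq]

end SFinite

section Finite

variable [IsFiniteMeasure μ] [IsFiniteMeasure ν]

theorem boxLIntegral_ofReal_ne_top (hF₁ : ∀ z, F₁ z ≤ C₁) (hF₂ : ∀ z, F₂ z ≤ C₂)
    (hF₃ : ∀ z, F₃ z ≤ C₃) (hF₄ : ∀ z, F₄ z ≤ C₄) :
    boxLIntegral μ ν (ENNReal.ofReal ∘ F₁) (ENNReal.ofReal ∘ F₂) (ENNReal.ofReal ∘ F₃)
      (ENNReal.ofReal ∘ F₄) ≠ ⊤ :=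
  ne_top_of_le_ne_top (by finiteness) (lintegral_lintegral_le_of_le fun x y =>
    lintegral_lintegral_le_of_le fun x' y' => ofReal_box_le hF₁ hF₂ hF₃ hF₄ x x' y y')

theorem boxIntegral_eq_toReal_boxLIntegral (hF₁ : Measurable F₁) (hF₂ : Measurable F₂)
    (hF₃ : Measurable F₃) (hF₄ : Measurable F₄) (hC₁ : ∀ z, F₁ z ∈ Icc 0 C₁)
    (hC₂ : ∀ z, F₂ z ∈ Icc 0 C₂) (hC₃ : ∀ z, F₃ z ∈ Icc 0 C₃) (hC₄ : ∀ z, F₄ z ∈ Icc 0 C₄) :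
    boxIntegral μ ν F₁ F₂ F₃ F₄ = (boxLIntegral μ ν (ENNReal.ofReal ∘ F₁) (ENNReal.ofReal ∘ F₂)
      (ENNReal.ofReal ∘ F₃) (ENNReal.ofReal ∘ F₄)).toReal := by
  have hle := ofReal_box_le (fun z => (hC₁ z).2) (fun z => (hC₂ z).2) (fun z => (hC₃ z).2)
    (fun z => (hC₄ z).2)
  have hinner (x : X) (y : Y) :
      ∫ x', ∫ y', F₁ (x, y) * F₂ (x', y) * F₃ (x', y') * F₄ (x, y') ∂ν ∂μ =
        (∫⁻ x', ∫⁻ y', ENNReal.ofReal (F₁ (x, y)) * ENNReal.ofReal (F₂ (x', y)) *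
          ENNReal.ofReal (F₃ (x', y')) * ENNReal.ofReal (F₄ (x, y')) ∂ν ∂μ).toReal := by
    simp only [← integral_integral_toReal (by fun_prop) (by finiteness) (hle x · y ·), toReal_mul,
      toReal_ofReal (hC₁ _).1, toReal_ofReal (hC₂ _).1, toReal_ofReal (hC₃ _).1,
      toReal_ofReal (hC₄ _).1]
  simp only [boxIntegral, hinner]
  exact integral_integral_toReal (by fun_prop) (by finiteness) fun x y =>
    lintegral_lintegral_le_of_le fun x' y' => hle x x' y y'

theorem boxIntegral_le_sqrt_mul_sqrt (hF₁ : Measurable F₁) (hF₂ : Measurable F₂)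
    (hF₃ : Measurable F₃) (hF₄ : Measurable F₄) (hC₁ : ∀ z, F₁ z ∈ Icc 0 C₁)
    (hC₂ : ∀ z, F₂ z ∈ Icc 0 C₂) (hC₃ : ∀ z, F₃ z ∈ Icc 0 C₃) (hC₄ : ∀ z, F₄ z ∈ Icc 0 C₄) :
    boxIntegral μ ν F₁ F₂ F₃ F₄ ≤
      √(boxIntegral μ ν F₁ F₂ F₂ F₁) * √(boxIntegral μ ν F₄ F₃ F₃ F₄) := by
  have hle {F : X × Y → ℝ} {C : ℝ} (hF : ∀ z, F z ∈ Icc 0 C) : ∀ z, F z ≤ C := fun z => (hF z).2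
  rw [boxIntegral_eq_toReal_boxLIntegral hF₁ hF₂ hF₃ hF₄ hC₁ hC₂ hC₃ hC₄,
    boxIntegral_eq_toReal_boxLIntegral hF₁ hF₂ hF₂ hF₁ hC₁ hC₂ hC₂ hC₁,
    boxIntegral_eq_toReal_boxLIntegral hF₄ hF₃ hF₃ hF₄ hC₄ hC₃ hC₃ hC₄,
    ← Real.sqrt_mul toReal_nonneg, ← toReal_mul]
  refine (le_abs_self _).trans (Real.abs_le_sqrt ?_)
  rw [← toReal_pow]
  refine toReal_mono (mul_ne_top ?_ ?_) (boxLIntegral_sq_le hF₁.ennreal_ofReal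
    hF₂.ennreal_ofReal hF₃.ennreal_ofReal hF₄.ennreal_ofReal)
  · exact boxLIntegral_ofReal_ne_top (hle hC₁) (hle hC₂) (hle hC₂) (hle hC₁)
  · exact boxLIntegral_ofReal_ne_top (hle hC₄) (hle hC₃) (hle hC₃) (hle hC₄)

theorem boxIntegral_self_le {F : X × Y → ℝ} {C : ℝ} (hF : Measurable F)
    (hC : ∀ z, F z ∈ Icc 0 C) :
    boxIntegral μ ν F F F F ≤ (∫ z, F z ^ 2 ∂μ.prod ν) ^ 2 := by
  set S := ∫⁻ z, (ENNReal.ofReal ∘ F) z ^ 2 ∂μ.prod ν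
  have hS : ∫ z, F z ^ 2 ∂μ.prod ν = S.toReal := by
    rw [integral_eq_lintegral_of_nonneg_ae (ae_of_all _ fun z => sq_nonneg _) (by fun_prop)]
    simp only [S, Function.comp_apply, ofReal_pow (hC _).1]
  have hS_ne_top : S ≠ ⊤ := by
    refine ne_top_of_le_ne_top (by finiteness) ((lintegral_mono fun z => ?_).trans_eq
      (lintegral_const (ENNReal.ofReal C ^ 2)))
    exact pow_le_pow_left₀ zero_le (ofReal_le_ofReal (hC z).2) 2
  rw [boxIntegral_eq_toReal_boxLIntegral hF hF hF hF hC hC hC hC, hS, ← toReal_pow]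
  exact toReal_mono (pow_ne_top hS_ne_top) (boxLIntegral_self_le hF.ennreal_ofReal)

end Finite

end Box

@[fun_prop]
theorem continuous_vth : Continuous vth :=
  ((continuous_const.add continuous_abs).pow 4).inv₀ fun x => (by positivity : (1 + |x|) ^ 4 ≠ 0)

@[fun_prop]
theorem measurable_vth : Measurable vth :=
  continuous_vth.measurable

theorem vth_nonneg (x : ℝ) : 0 ≤ vth x := by unfold vth; positivity

theorem integrable_vth : Integrable vth := by
  refine integrable_inv_one_add_sq.mono' continuous_vth.aestronglyMeasurable
    (ae_of_all _ fun x => ?_)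
  rw [Real.norm_eq_abs, abs_of_nonneg (vth_nonneg x)]
  exact inv_anti₀ (by positivity) (by nlinarith [abs_nonneg x, sq_abs x])

def vthMeasure (t p : ℝ) : Measure ℝ :=
  volume.withDensity fun x => ENNReal.ofReal (t⁻¹ * vth ((p - x) / t))

instance (t p : ℝ) : IsFiniteMeasure (vthMeasure t p) := by
  refine isFiniteMeasure_withDensity_ofReal (Integrable.hasFiniteIntegral ?_)
  rcases eq_or_ne t 0 with rfl | ht
  · simp
  · exact ((integrable_comp_sub_left (fun u => vth (u / t)) p).2
      (integrable_vth.comp_div ht)).const_mul _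

section Kernel

variable {t : ℝ} (ht : 0 ≤ t)
include ht

theorem vth_scaled_nonneg (p x : ℝ) : 0 ≤ t⁻¹ * vth ((p - x) / t) :=
  mul_nonneg (inv_nonneg.2 ht) (vth_nonneg _)

theorem integral_vthMeasure (p : ℝ) (g : ℝ → ℝ) :
    ∫ x, g x ∂vthMeasure t p = ∫ x, t⁻¹ * vth ((p - x) / t) * g x :=
  integral_withDensity_ofReal (by fun_prop) (vth_scaled_nonneg ht p) g

theorem entConv_vth_eq_boxIntegral (F₁ F₂ F₃ F₄ : ℝ × ℝ → ℝ) (p q : ℝ) :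
    entConv F₁ F₂ F₃ F₄ vth vth vth vth t p q =
      boxIntegral (vthMeasure t p) (vthMeasure t q) F₁ F₂ F₃ F₄ := by
  simp only [boxIntegral, integral_vthMeasure ht, ← integral_const_mul, entConv]
  simp only [mul_comm, mul_left_comm, mul_assoc]

theorem integral_sq_mul_vth_eq (F : ℝ × ℝ → ℝ) (p q : ℝ) :
    ∫ z : ℝ × ℝ, F z ^ 2 * ((t⁻¹ * vth ((p - z.1) / t)) * (t⁻¹ * vth ((q - z.2) / t))) =
      ∫ z, F z ^ 2 ∂(vthMeasure t p).prod (vthMeasure t q) := by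
  rw [vthMeasure, vthMeasure, prod_withDensity (by fun_prop) (by fun_prop),
    ← Measure.volume_eq_prod]
  simp only [← ofReal_mul (vth_scaled_nonneg ht _ _)]
  rw [integral_withDensity_ofReal (by fun_prop)
    (fun z => mul_nonneg (vth_scaled_nonneg ht _ _) (vth_scaled_nonneg ht _ _))]
  simp only [mul_comm]

end Kernel

theorem Nice.exists_forall_mem_Icc {F : ℝ × ℝ → ℝ} (h : Nice F) : ∃ C, ∀ z, F z ∈ Icc 0 C := by
  obtain ⟨-, ⟨C, hC⟩, -, hF₀⟩ := h
  exact ⟨C, fun z => ⟨hF₀ z, (le_abs_self _).trans (hC z)⟩⟩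

/-- The box Cauchy–Schwarz inequality and the `L²`-average bound for
`A^{(p,q,t)}(F₁,F₂,F₃,F₄) = F * [ϑ⊗ϑ⊗ϑ⊗ϑ]_t(p,q,p,q)`. -/
theorem box_cauchy_schwarz (F1 F2 F3 F4 : ℝ × ℝ → ℝ)
    (h1 : Nice F1) (h2 : Nice F2) (h3 : Nice F3) (h4 : Nice F4)
    (p q t : ℝ) (ht : 0 < t) :
    (entConv F1 F2 F3 F4 vth vth vth vth t p q ≤
      Real.sqrt (entConv F1 F2 F2 F1 vth vth vth vth t p q) *
        Real.sqrt (entConv F4 F3 F3 F4 vth vth vth vth t p q)) ∧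
    ∀ F : ℝ × ℝ → ℝ, Nice F →
      entConv F F F F vth vth vth vth t p q ≤
        (∫ z : ℝ × ℝ, (F z)^2 * ((t⁻¹ * vth ((p - z.1)/t)) * (t⁻¹ * vth ((q - z.2)/t))))^2 := by
  obtain ⟨C₁, hC₁⟩ := h1.exists_forall_mem_Icc
  obtain ⟨C₂, hC₂⟩ := h2.exists_forall_mem_Icc
  obtain ⟨C₃, hC₃⟩ := h3.exists_forall_mem_Icc
  obtain ⟨C₄, hC₄⟩ := h4.exists_forall_mem_Icc
  simp only [entConv_vth_eq_boxIntegral ht.le]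
  refine ⟨boxIntegral_le_sqrt_mul_sqrt h1.1 h2.1 h3.1 h4.1 hC₁ hC₂ hC₃ hC₄, fun F hF => ?_⟩
  obtain ⟨C, hC⟩ := hF.exists_forall_mem_Icc
  rw [integral_sq_mul_vth_eq ht.le]
  exact boxIntegral_self_le hF.1 hC
end
end
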